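/- arXiv:2009.02234 — 2 statements merged into one kernel-verified Lean document; each statement's English description precedes it below -/
import Mathlib

section
/- Let K5 be the complete graph on 5 vertices, so |E(K5)| = 10. The element x ∈ ℤ^{E(K5)} × ℤ whose edge-coordinates are all equal to 2 and whose last coordinate is 4 satisfies: (i) x ∈ gp(M_{K5}); (ii) 4·x ∈ M_{K5} and the image of 4·x in ℝ^{E(K5)} × ℝ lies in the topological interior of cone(M_{K5}); (iii) x ∉ M_{K5}. In particular, the cut monoid M_{K5} is not normal. -/
/-! Basic definitions for cut monoids of finite simple graphs. -/

open Classical in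
/-- The cut vector of a vertex set `A`, as a function on `Sym2 V`:
value `1` on pairs with exactly one element in `A`, and `0` otherwise. -/
noncomputable def cutVec {V : Type} (A : Set V) : Sym2 V → ℤ :=
  Sym2.lift ⟨fun v w => if ((v ∈ A) ↔ (w ∈ A)) then 0 else 1,
    fun v w => if_congr iff_comm rfl rfl⟩

variable {V : Type}

/-- The generators `(δ_A, 1)` of the cut monoid of `G`. -/
def cutGens (G : SimpleGraph V) : Set ((G.edgeSet → ℤ) × ℤ) :=
  {p | ∃ A : Set V, p = (fun e => cutVec A e.1, 1)}

/-- The cut monoid `M_G` of a graph `G`. -/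
def cutMonoid (G : SimpleGraph V) : AddSubmonoid ((G.edgeSet → ℤ) × ℤ) :=
  AddSubmonoid.closure (cutGens G)

/-- The group `gp(M_G)` generated by the cut monoid. -/
def cutGroup (G : SimpleGraph V) : AddSubgroup ((G.edgeSet → ℤ) × ℤ) :=
  AddSubgroup.closure (cutGens G)

/-- `M_G` is normal: every `x ∈ gp(M_G)` with `n • x ∈ M_G` for some `n ≥ 1` lies in `M_G`. -/
def CutNormal (G : SimpleGraph V) : Prop :=
  ∀ x ∈ cutGroup G, (∃ n : ℕ, 1 ≤ n ∧ n • x ∈ cutMonoid G) → x ∈ cutMonoid G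

/-- `M_G` is seminormal: every `x ∈ gp(M_G)` with `2 • x ∈ M_G` and `3 • x ∈ M_G`
lies in `M_G`. -/
def CutSeminormal (G : SimpleGraph V) : Prop :=
  ∀ x ∈ cutGroup G, 2 • x ∈ cutMonoid G → 3 • x ∈ cutMonoid G → x ∈ cutMonoid G

/-- Generators of the cone of `M_G`: nonnegative real multiples of the `(δ_A, 1)`. -/
noncomputable def cutConeGens (G : SimpleGraph V) : Set ((G.edgeSet → ℝ) × ℝ) :=
  {q | ∃ (c : ℝ) (A : Set V), 0 ≤ c ∧
    q = c • ((fun e => ((cutVec A e.1 : ℤ) : ℝ), (1 : ℝ)))}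

/-- The cone `cone(M_G)`: all finite nonnegative real combinations of the `(δ_A, 1)`. -/
noncomputable def cutCone (G : SimpleGraph V) : Set ((G.edgeSet → ℝ) × ℝ) :=
  (AddSubmonoid.closure (cutConeGens G) : Set ((G.edgeSet → ℝ) × ℝ))

/-- The canonical map from `ℤ^E × ℤ` to `ℝ^E × ℝ`. -/
noncomputable def toRealCut (G : SimpleGraph V) (p : (G.edgeSet → ℤ) × ℤ) :
    (G.edgeSet → ℝ) × ℝ :=
  (fun e => ((p.1 e : ℤ) : ℝ), ((p.2 : ℤ) : ℝ))

/-- `int(M_G)`: elements of `M_G` mapping into the topological interior of `cone(M_G)`. -/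
noncomputable def cutInterior (G : SimpleGraph V) : Set ((G.edgeSet → ℤ) × ℤ) :=
  {p | p ∈ cutMonoid G ∧ toRealCut G p ∈ interior (cutCone G)}

/-- The set of last coordinates `α ∈ ℕ` realized by elements of `int(M_G)`;
its least element is `m(G)`. -/
noncomputable def cutDegrees (G : SimpleGraph V) : Set ℕ :=
  {α | ∃ x : G.edgeSet → ℤ, ((x, (α : ℤ)) : (G.edgeSet → ℤ) × ℤ) ∈ cutInterior G}

/-- `H` is a minor of `G`: branch sets `B u` are nonempty, pairwise disjoint,
induce connected subgraphs, and edges of `H` are witnessed by edges of `G`. -/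
def GraphMinor {W V : Type} (H : SimpleGraph W) (G : SimpleGraph V) : Prop :=
  ∃ B : W → Set V,
    (∀ u, (B u).Nonempty) ∧
    (∀ u v, u ≠ v → Disjoint (B u) (B v)) ∧
    (∀ u, (G.induce (B u)).Connected) ∧
    (∀ u v, H.Adj u v → ∃ a ∈ B u, ∃ b ∈ B v, G.Adj a b)

/-- `G` is `K₅`-minor-free. -/
def K5Free (G : SimpleGraph V) : Prop :=
  ¬ GraphMinor (⊤ : SimpleGraph (Fin 5)) G

/-- `G` is bipartite: vertices split into two parts so every edge joins the parts. -/
def BipartiteG (G : SimpleGraph V) : Prop :=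
  ∃ s : Set V, ∀ ⦃v w⦄, G.Adj v w → ((v ∈ s ∧ w ∉ s) ∨ (w ∈ s ∧ v ∉ s))

/-- `G` has an induced cycle of length `n` (n ≥ 3): an induced-subgraph copy of the
cycle graph of length `n`. -/
def HasInducedCycleLen (G : SimpleGraph V) (n : ℕ) : Prop :=
  3 ≤ n ∧ Nonempty (SimpleGraph.cycleGraph n ↪g G)

/-- `G` contains a triangle. -/
def HasTriangle (G : SimpleGraph V) : Prop :=
  ∃ a b c, G.Adj a b ∧ G.Adj b c ∧ G.Adj a c

/-- `G` is chordal: every induced cycle is a triangle. -/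
def ChordalG (G : SimpleGraph V) : Prop :=
  ∀ n, HasInducedCycleLen G n → n = 3

/-- `G` is bridgeless: every edge lies on some cycle. -/
def BridgelessG (G : SimpleGraph V) : Prop :=
  ∀ e ∈ G.edgeSet, ∃ (v : V) (c : G.Walk v v), c.IsCycle ∧ e ∈ c.edges

/-- `G` is (isomorphic to) a cycle of length `n`. -/
def IsCycleOfLen (G : SimpleGraph V) (n : ℕ) : Prop :=
  3 ≤ n ∧ Nonempty (G ≃g SimpleGraph.cycleGraph n)

/-- `G` is a cycle. -/
def IsCycleGraph (G : SimpleGraph V) : Prop :=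
  ∃ n, IsCycleOfLen G n

/-- `G` is a `0`-sum of `G1` and `G2`: copies of `G1`, `G2` cover `G`,
overlap in exactly one vertex, and every edge comes from `G1` or `G2`. -/
def IsZeroSumDecomp {V1 V2 : Type} (G : SimpleGraph V) (G1 : SimpleGraph V1)
    (G2 : SimpleGraph V2) : Prop :=
  ∃ (f1 : V1 ↪ V) (f2 : V2 ↪ V),
    Set.range f1 ∪ Set.range f2 = Set.univ ∧
    (∃ v, Set.range f1 ∩ Set.range f2 = {v}) ∧
    (∀ a b, G.Adj a b ↔
      ((∃ x y, f1 x = a ∧ f1 y = b ∧ G1.Adj x y) ∨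
       (∃ x y, f2 x = a ∧ f2 y = b ∧ G2.Adj x y)))

/-- `G` is a `1`-sum of `G1` and `G2` along a common edge. -/
def IsOneSumDecomp {V1 V2 : Type} (G : SimpleGraph V) (G1 : SimpleGraph V1)
    (G2 : SimpleGraph V2) : Prop :=
  ∃ (f1 : V1 ↪ V) (f2 : V2 ↪ V) (v w : V),
    v ≠ w ∧
    Set.range f1 ∪ Set.range f2 = Set.univ ∧
    Set.range f1 ∩ Set.range f2 = {v, w} ∧
    (∃ x y, f1 x = v ∧ f1 y = w ∧ G1.Adj x y) ∧
    (∃ x y, f2 x = v ∧ f2 y = w ∧ G2.Adj x y) ∧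
    (∀ a b, G.Adj a b ↔
      ((∃ x y, f1 x = a ∧ f1 y = b ∧ G1.Adj x y) ∨
       (∃ x y, f2 x = a ∧ f2 y = b ∧ G2.Adj x y)))

/-- Ring graphs: obtained, up to adding isolated vertices, from finitely many
(finite) trees and cycles by iterated `0`-sums and `1`-sums. -/
inductive IsRingGraph : {V : Type} → SimpleGraph V → Prop
  | tree {V : Type} (G : SimpleGraph V) :
      Finite V → G.Connected → G.IsAcyclic → IsRingGraph G
  | cycle {V : Type} (G : SimpleGraph V) : IsCycleGraph G → IsRingGraph G
  | zeroSum {V1 V2 V : Type} {G1 : SimpleGraph V1} {G2 : SimpleGraph V2}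
      {G : SimpleGraph V} :
      IsRingGraph G1 → IsRingGraph G2 → IsZeroSumDecomp G G1 G2 → IsRingGraph G
  | oneSum {V1 V2 V : Type} {G1 : SimpleGraph V1} {G2 : SimpleGraph V2}
      {G : SimpleGraph V} :
      IsRingGraph G1 → IsRingGraph G2 → IsOneSumDecomp G G1 G2 → IsRingGraph G
  | addIsolated {V W : Type} {G : SimpleGraph V} {H : SimpleGraph W} (f : V ↪ W) :
      IsRingGraph G → (∀ a b, H.Adj a b ↔ ∃ x y, f x = a ∧ f y = b ∧ G.Adj x y) →
      IsRingGraph H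

/-- An edge of an induced subgraph is an edge of the ambient graph. -/
lemma induce_edge_mem (G : SimpleGraph V) (s : Set V) (e : Sym2 s)
    (he : e ∈ (G.induce s).edgeSet) : e.map Subtype.val ∈ G.edgeSet := by
  induction e using Sym2.ind with
  | _ a b =>
    rw [Sym2.map_pair_eq, SimpleGraph.mem_edgeSet]
    exact he

/-- Restriction of a vector indexed by the edges of `G` to the edges of the
subgraph of `G` induced on `s`. -/
noncomputable def restrictCut (G : SimpleGraph V) (s : Set V) (p : G.edgeSet → ℤ) :
    (G.induce s).edgeSet → ℤ :=
  fun e => p ⟨e.1.map Subtype.val, induce_edge_mem G s e.1 e.2⟩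

/-- The complete graph on five vertices. -/
def K5 : SimpleGraph (Fin 5) := ⊤

/-- The element of `ℤ^{E(K₅)} × ℤ` with all edge-coordinates `2` and last coordinate `4`. -/
def xK5 : (K5.edgeSet → ℤ) × ℤ := (fun _ => 2, 4)


/-! ### Auxiliary lemmas -/

open Classical in
lemma cutVec_mk {V : Type} (A : Set V) (u v : V) :
    cutVec A s(u,v) = if (u ∈ A ↔ v ∈ A) then 0 else 1 := rfl

noncomputable def gZ (A : Set (Fin 5)) : (K5.edgeSet → ℤ) × ℤ := (fun e => cutVec A e.1, 1)

lemma gZ_mem (A : Set (Fin 5)) : gZ A ∈ cutMonoid K5 :=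
  AddSubmonoid.subset_closure ⟨A, rfl⟩

lemma adj_of_mem {u v : Fin 5} (h : s(u,v) ∈ K5.edgeSet) : u ≠ v := by
  simpa [K5] using ((SimpleGraph.mem_edgeSet K5).1 h)

lemma part2mem : (4:ℕ) • xK5 ∈ cutMonoid K5 := by
  have h : (4:ℕ) • xK5 = gZ {0} + gZ {1} + gZ {2} + gZ {3} + gZ {4}
      + gZ {0,1} + gZ {0,2} + gZ {0,3} + gZ {0,4} + gZ {1,2} + gZ {1,3} + gZ {1,4}
      + gZ {2,3} + gZ {2,4} + gZ {3,4} + gZ ∅ := by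
    apply Prod.ext
    · funext e
      obtain ⟨s, hs⟩ := e
      induction s using Sym2.ind with
      | _ u v =>
        have huv := adj_of_mem hs
        fin_cases u <;> fin_cases v <;>
          first
            | exact absurd rfl huv
            | (show (8:ℤ) = _
               simp (config := {decide := true}) [gZ, xK5, cutVec_mk, Set.mem_insert_iff,
                 Set.mem_singleton_iff, Set.mem_empty_iff_false])
    · show (4:ℕ) • (4:ℤ) = _
      simp [gZ]
  rw [h]
  repeat' apply add_mem
  all_goals exact gZ_mem _

lemma part1mem : xK5 ∈ cutGroup K5 := by
  have h : xK5 = gZ {0} + gZ {1} + gZ {2} + gZ {3} + gZ {4} - gZ ∅ := by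
    apply Prod.ext
    · funext e
      obtain ⟨s, hs⟩ := e
      induction s using Sym2.ind with
      | _ u v =>
        have huv := adj_of_mem hs
        fin_cases u <;> fin_cases v <;>
          first
            | exact absurd rfl huv
            | (show (2:ℤ) = _
               simp (config := {decide := true}) [gZ, xK5, cutVec_mk,
                 Set.mem_singleton_iff, Set.mem_empty_iff_false])
    · show (4:ℤ) = _
      simp [gZ]
  rw [h]
  have hg : ∀ A : Set (Fin 5), gZ A ∈ cutGroup K5 :=
    fun A => AddSubgroup.subset_closure ⟨A, rfl⟩
  exact sub_mem (add_mem (add_mem (add_mem (add_mem (hg _) (hg _)) (hg _)) (hg _)) (hg _)) (hg _)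

/-! ### Non-membership of `xK5` in the cut monoid -/

def fB (m : ℕ) (u v : Fin 5) : ℕ :=
  if Nat.testBit (2*m) (u:ℕ) = Nat.testBit (2*m) (v:ℕ) then 0 else 1

def S : ℕ → ℕ
  | 0 => 0 | 1 => 299009 | 2 => 18878472 | 3 => 19169289
  | 4 => 136347712 | 5 => 136581185 | 6 => 151031880 | 7 => 151257161
  | 8 => 151257600 | 9 => 151032321 | 10 => 136581640 | 11 => 136348169
  | 12 => 19169856 | 13 => 18879041 | 14 => 299592 | 15 => 585
  | _ => 0

lemma S_spec : ∀ m < 16, S m =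
    fB m 0 1 + 8 * fB m 0 2 + 64 * fB m 0 3 + 512 * fB m 0 4 +
    4096 * fB m 1 2 + 32768 * fB m 1 3 + 262144 * fB m 1 4 +
    2097152 * fB m 2 3 + 16777216 * fB m 2 4 + 134217728 * fB m 3 4 := by decide

set_option maxRecDepth 10000 in
set_option maxHeartbeats 8000000 in
lemma key2 : ∀ a < 16, ∀ b < 16, ∀ c < 16, ∀ d < 16,
    S a + S b + S c + S d ≠ 306783378 := by decide

lemma mask_lt (x1 x2 x3 x4 : Bool) :
    (cond x1 1 0) + (cond x2 2 0) + (cond x3 4 0) + (cond x4 8 0) < 16 := by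
  cases x1 <;> cases x2 <;> cases x3 <;> cases x4 <;> decide

lemma maskBit (x1 x2 x3 x4 : Bool) (j : Fin 5) :
    Nat.testBit (2*((cond x1 1 0)+(cond x2 2 0)+(cond x3 4 0)+(cond x4 8 0))) (j:ℕ)
      = [false, x1, x2, x3, x4].get j := by
  cases x1 <;> cases x2 <;> cases x3 <;> cases x4 <;> fin_cases j <;> decide

lemma fB_eq (b : Fin 5 → Bool) (h0 : b 0 = false) (u v : Fin 5) :
    fB ((cond (b 1) 1 0)+(cond (b 2) 2 0)+(cond (b 3) 4 0)+(cond (b 4) 8 0)) u v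
      = if b u = b v then 0 else 1 := by
  have hg : ∀ w : Fin 5, [false, b 1, b 2, b 3, b 4].get w = b w := by
    intro w; fin_cases w <;> first | rfl | simp [h0]
  unfold fB
  rw [maskBit (b 1) (b 2) (b 3) (b 4) u, maskBit (b 1) (b 2) (b 3) (b 4) v, hg u, hg v]

lemma noFour (c1 c2 c3 c4 : Fin 5 → Bool)
    (h : ∀ u v : Fin 5, u ≠ v →
      (if c1 u = c1 v then (0:ℤ) else 1) + (if c2 u = c2 v then (0:ℤ) else 1) +
      (if c3 u = c3 v then (0:ℤ) else 1) + (if c4 u = c4 v then (0:ℤ) else 1) = 2) : False := by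
  have hiff : ∀ (cc : Fin 5 → Bool) (u v : Fin 5),
      ((cc u != cc 0) = (cc v != cc 0)) ↔ (cc u = cc v) := by
    intro cc u v
    cases h1 : cc u <;> cases h2 : cc v <;> cases h3 : cc 0 <;> simp
  have key : ∀ cc : Fin 5 → Bool, ∀ u v : Fin 5,
      ((fB ((cond ((fun w => cc w != cc 0) 1) 1 0)+(cond ((fun w => cc w != cc 0) 2) 2 0)
        +(cond ((fun w => cc w != cc 0) 3) 4 0)+(cond ((fun w => cc w != cc 0) 4) 8 0)) u v : ℤ))
        = if cc u = cc v then (0:ℤ) else 1 := by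
    intro cc u v
    rw [fB_eq (fun w => cc w != cc 0) (by simp) u v]
    by_cases hb : cc u = cc v
    · rw [if_pos ((hiff cc u v).2 hb), if_pos hb]; norm_num
    · rw [if_neg (fun hh => hb ((hiff cc u v).1 hh)), if_neg hb]; norm_num
  set m1 := (cond ((fun w => c1 w != c1 0) 1) 1 0)+(cond ((fun w => c1 w != c1 0) 2) 2 0)
        +(cond ((fun w => c1 w != c1 0) 3) 4 0)+(cond ((fun w => c1 w != c1 0) 4) 8 0) with hm1
  set m2 := (cond ((fun w => c2 w != c2 0) 1) 1 0)+(cond ((fun w => c2 w != c2 0) 2) 2 0)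
        +(cond ((fun w => c2 w != c2 0) 3) 4 0)+(cond ((fun w => c2 w != c2 0) 4) 8 0) with hm2
  set m3 := (cond ((fun w => c3 w != c3 0) 1) 1 0)+(cond ((fun w => c3 w != c3 0) 2) 2 0)
        +(cond ((fun w => c3 w != c3 0) 3) 4 0)+(cond ((fun w => c3 w != c3 0) 4) 8 0) with hm3
  set m4 := (cond ((fun w => c4 w != c4 0) 1) 1 0)+(cond ((fun w => c4 w != c4 0) 2) 2 0)
        +(cond ((fun w => c4 w != c4 0) 3) 4 0)+(cond ((fun w => c4 w != c4 0) 4) 8 0) with hm4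
  have hN : ∀ u v : Fin 5, u ≠ v →
      fB m1 u v + fB m2 u v + fB m3 u v + fB m4 u v = 2 := by
    intro u v huv
    have hz := h u v huv
    rw [← key c1 u v, ← key c2 u v, ← key c3 u v, ← key c4 u v] at hz
    exact_mod_cast hz
  have l1 : m1 < 16 := hm1 ▸ mask_lt _ _ _ _
  have l2 : m2 < 16 := hm2 ▸ mask_lt _ _ _ _
  have l3 : m3 < 16 := hm3 ▸ mask_lt _ _ _ _
  have l4 : m4 < 16 := hm4 ▸ mask_lt _ _ _ _
  have p01 := hN 0 1 (by decide); have p02 := hN 0 2 (by decide)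
  have p03 := hN 0 3 (by decide); have p04 := hN 0 4 (by decide)
  have p12 := hN 1 2 (by decide); have p13 := hN 1 3 (by decide)
  have p14 := hN 1 4 (by decide); have p23 := hN 2 3 (by decide)
  have p24 := hN 2 4 (by decide); have p34 := hN 3 4 (by decide)
  have hsum : S m1 + S m2 + S m3 + S m4 = 306783378 := by
    rw [S_spec m1 l1, S_spec m2 l2, S_spec m3 l3, S_spec m4 l4]
    omega
  exact (key2 m1 l1 m2 l2 m3 l3 m4 l4) hsum

open Classical in
lemma cutVec_chi (A : Set (Fin 5)) (u v : Fin 5) :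
    cutVec A s(u,v) =
      if ((if u ∈ A then true else false) = (if v ∈ A then true else false)) then 0 else 1 := by
  rw [cutVec_mk]; by_cases hu : u ∈ A <;> by_cases hv : v ∈ A <;> simp [hu, hv]

def SubM : AddSubmonoid ((K5.edgeSet → ℤ) × ℤ) where
  carrier := {p | ∃ l : List (Set (Fin 5)), p = (l.map gZ).sum}
  zero_mem' := ⟨[], rfl⟩
  add_mem' := by
    rintro p q ⟨l1, h1⟩ ⟨l2, h2⟩
    exact ⟨l1 ++ l2, by simp [h1, h2]⟩

lemma sum_snd (l : List (Set (Fin 5))) : ((l.map gZ).sum).2 = l.length := by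
  induction l with
  | nil => rfl
  | cons A l ih => simp [gZ, ih]; ring

open Classical in
lemma part3not : xK5 ∉ cutMonoid K5 := by
  intro hx
  have hsub : cutMonoid K5 ≤ SubM := by
    rw [cutMonoid, AddSubmonoid.closure_le]
    rintro p ⟨A, rfl⟩
    exact ⟨[A], by simp [gZ]⟩
  obtain ⟨l, hl⟩ := hsub hx
  have hlen : l.length = 4 := by
    have h2 := congrArg Prod.snd hl
    rw [sum_snd] at h2
    simp only [xK5] at h2
    exact_mod_cast h2.symm
  match l, hlen with
  | [A1, A2, A3, A4], _ =>
    have hA : ∀ u v : Fin 5, u ≠ v →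
        cutVec A1 s(u,v) + cutVec A2 s(u,v) + cutVec A3 s(u,v) + cutVec A4 s(u,v) = 2 := by
      intro u v huv
      have hm : s(u,v) ∈ K5.edgeSet := (SimpleGraph.mem_edgeSet K5).2 (by simpa [K5] using huv)
      have := congrFun (congrArg Prod.fst hl) ⟨s(u,v), hm⟩
      simp [xK5, gZ] at this
      linarith
    exact noFour (fun x => if x ∈ A1 then true else false) (fun x => if x ∈ A2 then true else false)
      (fun x => if x ∈ A3 then true else false) (fun x => if x ∈ A4 then true else false)
      (fun u v huv => by rw [← cutVec_chi, ← cutVec_chi, ← cutVec_chi, ← cutVec_chi]; exact hA u v huv)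

/-! ### Interior membership -/

open Classical in
lemma cutVecR (A : Set (Fin 5)) (u v : Fin 5) :
    ((cutVec A s(u,v) : ℤ) : ℝ) = if (u ∈ A ↔ v ∈ A) then 0 else 1 := by
  rw [cutVec_mk]; split <;> norm_num

noncomputable def gR (A : Set (Fin 5)) : (K5.edgeSet → ℝ) × ℝ :=
  ((fun e => ((cutVec A e.1 : ℤ) : ℝ)), (1:ℝ))

lemma smul_gR_mem {t : ℝ} (ht : 0 ≤ t) (A : Set (Fin 5)) : t • gR A ∈ cutCone K5 :=
  AddSubmonoid.subset_closure ⟨t, A, ht, rfl⟩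

abbrev ed (u v : Fin 5) (h : u ≠ v := by decide) : K5.edgeSet :=
  ⟨s(u,v), (SimpleGraph.mem_edgeSet K5).2 (by simpa [K5] using h)⟩

lemma ed_swap (u v : Fin 5) (h : u ≠ v) : ed u v h = ed v u h.symm :=
  Subtype.ext (Sym2.eq_swap)

noncomputable def Ubox : Set ((K5.edgeSet → ℝ) × ℝ) :=
  (⋂ e : K5.edgeSet, {q | |q.1 e - 8| < 1/16}) ∩ {q | |q.2 - 16| < 1/16}

lemma Ubox_open : IsOpen Ubox := by
  apply IsOpen.inter
  · apply isOpen_iInter_of_finite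
    intro e
    exact isOpen_lt ((((continuous_apply e).comp continuous_fst).sub continuous_const).abs)
      continuous_const
  · exact isOpen_lt ((continuous_snd.sub continuous_const).abs) continuous_const

set_option maxHeartbeats 3200000 in
lemma Ubox_sub : Ubox ⊆ cutCone K5 := by
  rintro ⟨f, c⟩ ⟨hf, hc⟩
  rw [Set.mem_iInter] at hf
  simp only [Set.mem_setOf_eq] at hf hc
  have B : ∀ (u v : Fin 5) (h : u ≠ v), -(1/16) < f (ed u v h) - 8 ∧ f (ed u v h) - 8 < 1/16 :=
    fun u v h => abs_lt.1 (hf (ed u v h))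
  have b01 := B 0 1 (by decide); have b02 := B 0 2 (by decide)
  have b03 := B 0 3 (by decide); have b04 := B 0 4 (by decide)
  have b12 := B 1 2 (by decide); have b13 := B 1 3 (by decide)
  have b14 := B 1 4 (by decide); have b23 := B 2 3 (by decide)
  have b24 := B 2 4 (by decide); have b34 := B 3 4 (by decide)
  have hcb := abs_lt.1 hc
  set t0 : ℝ := 1 + ((f (ed 0 1) + f (ed 0 2) + f (ed 0 3) + f (ed 0 4)) - 32)/2 with ht0
  set t1 : ℝ := 1 + ((f (ed 0 1) + f (ed 1 2) + f (ed 1 3) + f (ed 1 4)) - 32)/2 with ht1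
  set t2 : ℝ := 1 + ((f (ed 0 2) + f (ed 1 2) + f (ed 2 3) + f (ed 2 4)) - 32)/2 with ht2
  set t3 : ℝ := 1 + ((f (ed 0 3) + f (ed 1 3) + f (ed 2 3) + f (ed 3 4)) - 32)/2 with ht3
  set t4 : ℝ := 1 + ((f (ed 0 4) + f (ed 1 4) + f (ed 2 4) + f (ed 3 4)) - 32)/2 with ht4
  set s01 : ℝ := 1 - (f (ed 0 1) - 8)/2 with hs01
  set s02 : ℝ := 1 - (f (ed 0 2) - 8)/2 with hs02
  set s03 : ℝ := 1 - (f (ed 0 3) - 8)/2 with hs03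
  set s04 : ℝ := 1 - (f (ed 0 4) - 8)/2 with hs04
  set s12 : ℝ := 1 - (f (ed 1 2) - 8)/2 with hs12
  set s13 : ℝ := 1 - (f (ed 1 3) - 8)/2 with hs13
  set s14 : ℝ := 1 - (f (ed 1 4) - 8)/2 with hs14
  set s23 : ℝ := 1 - (f (ed 2 3) - 8)/2 with hs23
  set s24 : ℝ := 1 - (f (ed 2 4) - 8)/2 with hs24
  set s34 : ℝ := 1 - (f (ed 3 4) - 8)/2 with hs34
  set te : ℝ := 1 - ((f (ed 0 1) + f (ed 0 2) + f (ed 0 3) + f (ed 0 4) + f (ed 1 2)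
      + f (ed 1 3) + f (ed 1 4) + f (ed 2 3) + f (ed 2 4) + f (ed 3 4)) - 80)/2
      + (c - 16) with hte
  have hrep : ((f, c) : (K5.edgeSet → ℝ) × ℝ) =
      t0 • gR {0} + t1 • gR {1} + t2 • gR {2} + t3 • gR {3} + t4 • gR {4}
      + s01 • gR {0,1} + s02 • gR {0,2} + s03 • gR {0,3} + s04 • gR {0,4}
      + s12 • gR {1,2} + s13 • gR {1,3} + s14 • gR {1,4} + s23 • gR {2,3}
      + s24 • gR {2,4} + s34 • gR {3,4} + te • gR ∅ := by
    apply Prod.ext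
    · funext e
      obtain ⟨sy, hs⟩ := e
      induction sy using Sym2.ind with
      | _ u v =>
        have huv := adj_of_mem hs
        have hee : (⟨s(u,v), hs⟩ : K5.edgeSet) = ed u v huv := rfl
        rw [hee]
        fin_cases u <;> fin_cases v <;>
          first
            | exact absurd rfl huv
            | (simp (config := {decide := true}) [gR, ed, cutVecR, Set.mem_insert_iff,
                Set.mem_singleton_iff, Set.mem_empty_iff_false, ht0, ht1, ht2, ht3, ht4,
                hs01, hs02, hs03, hs04, hs12, hs13, hs14, hs23, hs24, hs34, hte]
               try ring
               try exact congrArg _ (Subtype.ext Sym2.eq_swap))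
    · show c = _
      simp only [Prod.snd_add, Prod.smul_snd, gR, smul_eq_mul, mul_one]
      rw [ht0, ht1, ht2, ht3, ht4, hs01, hs02, hs03, hs04, hs12, hs13, hs14, hs23, hs24,
        hs34, hte]
      ring
  rw [hrep]
  refine AddSubmonoid.add_mem _ (AddSubmonoid.add_mem _ (AddSubmonoid.add_mem _
    (AddSubmonoid.add_mem _ (AddSubmonoid.add_mem _ (AddSubmonoid.add_mem _
    (AddSubmonoid.add_mem _ (AddSubmonoid.add_mem _ (AddSubmonoid.add_mem _
    (AddSubmonoid.add_mem _ (AddSubmonoid.add_mem _ (AddSubmonoid.add_mem _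
    (AddSubmonoid.add_mem _ (AddSubmonoid.add_mem _ (AddSubmonoid.add_mem _
    (smul_gR_mem ?_ _) (smul_gR_mem ?_ _)) (smul_gR_mem ?_ _)) (smul_gR_mem ?_ _))
    (smul_gR_mem ?_ _)) (smul_gR_mem ?_ _)) (smul_gR_mem ?_ _)) (smul_gR_mem ?_ _))
    (smul_gR_mem ?_ _)) (smul_gR_mem ?_ _)) (smul_gR_mem ?_ _)) (smul_gR_mem ?_ _))
    (smul_gR_mem ?_ _)) (smul_gR_mem ?_ _)) (smul_gR_mem ?_ _)) (smul_gR_mem ?_ _)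
  · rw [ht0]; linarith [b01.1, b02.1, b03.1, b04.1]
  · rw [ht1]; linarith [b01.1, b12.1, b13.1, b14.1]
  · rw [ht2]; linarith [b02.1, b12.1, b23.1, b24.1]
  · rw [ht3]; linarith [b03.1, b13.1, b23.1, b34.1]
  · rw [ht4]; linarith [b04.1, b14.1, b24.1, b34.1]
  · rw [hs01]; linarith [b01.2]
  · rw [hs02]; linarith [b02.2]
  · rw [hs03]; linarith [b03.2]
  · rw [hs04]; linarith [b04.2]
  · rw [hs12]; linarith [b12.2]
  · rw [hs13]; linarith [b13.2]
  · rw [hs14]; linarith [b14.2]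
  · rw [hs23]; linarith [b23.2]
  · rw [hs24]; linarith [b24.2]
  · rw [hs34]; linarith [b34.2]
  · rw [hte]
    linarith [b01.2, b02.2, b03.2, b04.2, b12.2, b13.2, b14.2, b23.2, b24.2, b34.2, hcb.1]

lemma part2int : toRealCut K5 ((4:ℕ) • xK5) ∈ interior (cutCone K5) := by
  have hpt : toRealCut K5 ((4:ℕ) • xK5) = ((fun _ => (8:ℝ)), (16:ℝ)) := by
    apply Prod.ext
    · funext e
      show (((((4:ℕ) • xK5).1 e : ℤ)) : ℝ) = 8
      norm_num [xK5]
    · show ((((4:ℕ) • xK5).2 : ℤ) : ℝ) = 16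
      norm_num [xK5]
  have hmem : ((fun _ => (8:ℝ)), (16:ℝ)) ∈ Ubox := by
    constructor
    · rw [Set.mem_iInter]
      intro e
      norm_num
    · norm_num
  exact mem_interior.2 ⟨Ubox, Ubox_sub, Ubox_open, hpt ▸ hmem⟩

/-- For `x = (2,…,2,4)` one has `x ∈ gp(M_{K₅})`, `4·x ∈ M_{K₅}` with
`4·x` mapping into the interior of `cone(M_{K₅})`, and `x ∉ M_{K₅}`; in particular the
cut monoid `M_{K₅}` is not normal. -/
theorem K5_cut_not_normal :
    xK5 ∈ cutGroup K5 ∧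
    ((4 : ℕ) • xK5 ∈ cutMonoid K5 ∧
      toRealCut K5 ((4 : ℕ) • xK5) ∈ interior (cutCone K5)) ∧
    xK5 ∉ cutMonoid K5 ∧
    ¬ CutNormal K5 := by
  refine ⟨part1mem, ⟨part2mem, part2int⟩, part3not, ?_⟩
  intro hnorm
  exact part3not (hnorm xK5 part1mem ⟨4, by norm_num, part2mem⟩)
end

section
/- The cut monoid M_{K5} of the complete graph K5 on 5 vertices is not seminormal: there exists x ∈ gp(M_{K5}) with 2·x ∈ M_{K5} and 3·x ∈ M_{K5} but x ∉ M_{K5}. -/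
variable {V : Type}

/-!
Take `x = (2·𝟙, 4)`. Explicit families of 8 and 12 cuts show `2x, 3x ∈ M_{K₅}`, hence also
`x = 3x - 2x ∈ gp(M_{K₅})`. If `x` were in `M_{K₅}`, it would be a sum of four cuts covering
every edge twice. With signs `σ_A(v) = ±1` according as `v ∈ A`, one has
`σ_A(u) σ_A(v) = 1 - 2 δ_A(uv)`, so the sign vectors `(σ_{A_i}(v))_i ∈ ℝ⁴` of the five vertices
would be pairwise orthogonal and nonzero, which is impossible in dimension four.
-/

section CutMonoid

variable {G : SimpleGraph V}

lemma cutVec_self (A : Set V) (v : V) : cutVec A s(v, v) = 0 := by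
  simp [cutVec]

lemma cutVec_coe_finset [DecidableEq V] (A : Finset V) (u v : V) :
    cutVec (A : Set V) s(u, v) = if (u ∈ A ↔ v ∈ A) then 0 else 1 := by
  simp [cutVec]

open Classical in
noncomputable def cutSign (A : Set V) (v : V) : ℝ := if v ∈ A then 1 else -1

lemma cutSign_mul_cutSign (A : Set V) (u v : V) :
    cutSign A u * cutSign A v = 1 - 2 * cutVec A s(u, v) := by
  classical
  by_cases hu : u ∈ A <;> by_cases hv : v ∈ A <;> simp [cutSign, cutVec, hu, hv] <;> norm_num

lemma mem_cutMonoid_iff {p : (G.edgeSet → ℤ) × ℤ} :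
    p ∈ cutMonoid G ↔
      ∃ (k : ℕ) (A : Fin k → Set V), p = (fun e => ∑ i, cutVec (A i) e.1, (k : ℤ)) := by
  constructor
  · intro hp
    induction hp using AddSubmonoid.closure_induction with
    | mem p hp =>
      obtain ⟨A, rfl⟩ := hp
      exact ⟨1, fun _ => A, by simp⟩
    | zero => exact ⟨0, Fin.elim0, by ext <;> simp⟩
    | add p q _ _ hp hq =>
      obtain ⟨k, A, rfl⟩ := hp
      obtain ⟨l, B, rfl⟩ := hq
      refine ⟨k + l, Fin.append A B, ?_⟩
      ext e <;> simp [Fin.sum_univ_add]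
  · rintro ⟨k, A, rfl⟩
    have hsum : ∑ i, ((fun e => cutVec (A i) e.1, 1) : (G.edgeSet → ℤ) × ℤ) ∈ cutMonoid G :=
      sum_mem fun i _ => AddSubmonoid.subset_closure ⟨A i, rfl⟩
    convert hsum using 1
    ext e <;> simp [Prod.fst_sum, Prod.snd_sum, Finset.sum_apply]

lemma cutMonoid_le_cutGroup (G : SimpleGraph V) :
    cutMonoid G ≤ (cutGroup G).toAddSubmonoid :=
  AddSubmonoid.closure_le.2 fun _ hp => AddSubgroup.subset_closure hp

lemma mem_cutMonoid_of_sum_finset_cuts [DecidableEq V] {k : ℕ} (F : Fin k → Finset V) (c : ℤ)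
    (h : ∀ u v, G.Adj u v → ∑ i, (if (u ∈ F i ↔ v ∈ F i) then 0 else 1 : ℤ) = c) :
    ((fun _ => c, (k : ℤ)) : (G.edgeSet → ℤ) × ℤ) ∈ cutMonoid G := by
  refine mem_cutMonoid_iff.2 ⟨k, fun i => F i, ?_⟩
  ext ⟨e, he⟩
  · induction e using Sym2.ind with
    | _ u v => simpa only [cutVec_coe_finset] using (h u v he).symm
  · rfl

theorem card_le_of_two_mul_sum_cutVec_eq [Fintype V] {k : ℕ} (hk : 0 < k)
    (A : Fin k → Set V) (h : ∀ u v, u ≠ v → 2 * ∑ i, cutVec (A i) s(u, v) = k) :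
    Fintype.card V ≤ k := by
  let w : V → EuclideanSpace ℝ (Fin k) := fun v => WithLp.toLp 2 fun i => cutSign (A i) v
  have hinner : ∀ u v, inner ℝ (w u) (w v) = k - 2 * ∑ i, (cutVec (A i) s(u, v) : ℝ) := by
    intro u v
    simp only [w, EuclideanSpace.inner_toLp_toLp, dotProduct, star_trivial, mul_comm (cutSign _ v),
      cutSign_mul_cutSign, Finset.sum_sub_distrib, Finset.mul_sum]
    simp
  have hne : ∀ v, w v ≠ 0 := by
    intro v hv
    have := hinner v v
    simp only [hv, inner_zero_left, cutVec_self, Int.cast_zero, Finset.sum_const_zero, mul_zero,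
      sub_zero] at this
    exact hk.ne (by exact_mod_cast this)
  have horth : Pairwise fun u v => inner ℝ (w u) (w v) = 0 := by
    intro u v huv
    rw [hinner, sub_eq_zero]
    exact_mod_cast (h u v huv).symm
  simpa using (linearIndependent_of_ne_zero_of_inner_eq_zero hne horth).fintype_card_le_finrank

lemma card_le_of_const_mem_cutMonoid_top [Fintype V] {c : ℤ} (hc : 0 < c)
    (hmem : ((fun _ => c, 2 * c) : ((⊤ : SimpleGraph V).edgeSet → ℤ) × ℤ) ∈ cutMonoid ⊤) :
    (Fintype.card V : ℤ) ≤ 2 * c := by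
  obtain ⟨k, A, heq⟩ := mem_cutMonoid_iff.1 hmem
  obtain ⟨hfst, hsnd⟩ := Prod.mk.inj heq
  rw [hsnd]
  refine Int.ofNat_le.2 (card_le_of_two_mul_sum_cutVec_eq (by omega) A fun u v huv => ?_)
  rw [← hsnd, ← congrFun hfst ⟨s(u, v), huv⟩]

end CutMonoid

/-- The cut monoid of `K₅` is not seminormal: there is an
`x ∈ gp(M_{K₅})` with `2 • x ∈ M_{K₅}` and `3 • x ∈ M_{K₅}` but `x ∉ M_{K₅}`. -/
theorem K5_cut_not_seminormal :
    ¬ CutSeminormal (⊤ : SimpleGraph (Fin 5)) ∧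
    ∃ x ∈ cutGroup (⊤ : SimpleGraph (Fin 5)),
      2 • x ∈ cutMonoid (⊤ : SimpleGraph (Fin 5)) ∧
      3 • x ∈ cutMonoid (⊤ : SimpleGraph (Fin 5)) ∧
      x ∉ cutMonoid (⊤ : SimpleGraph (Fin 5)) := by
  let x : ((⊤ : SimpleGraph (Fin 5)).edgeSet → ℤ) × ℤ := (fun _ => 2, 2 * 2)
  have h2 : 2 • x ∈ cutMonoid ⊤ := by
    have : 2 • x = (fun _ => 4, ((8 : ℕ) : ℤ)) := by ext <;> simp [x]
    rw [this]
    refine mem_cutMonoid_of_sum_finset_cuts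
      ![∅, {0}, {1, 2}, {1, 3}, {1, 4}, {2, 3}, {2, 4}, {3, 4}] 4 ?_
    decide
  have h3 : 3 • x ∈ cutMonoid ⊤ := by
    have : 3 • x = (fun _ => 6, ((12 : ℕ) : ℤ)) := by ext <;> simp [x]
    rw [this]
    refine mem_cutMonoid_of_sum_finset_cuts
      ![∅, ∅, {0, 1}, {0, 2}, {0, 3}, {0, 4}, {1, 2}, {1, 3}, {1, 4}, {2, 3}, {2, 4}, {3, 4}] 6 ?_
    decide
  have hgp : x ∈ cutGroup ⊤ := by
    have : x = 3 • x - 2 • x := by rw [succ_nsmul x 2]; abel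
    rw [this]
    exact sub_mem (cutMonoid_le_cutGroup _ h3) (cutMonoid_le_cutGroup _ h2)
  have hnot : x ∉ cutMonoid ⊤ := fun hx => by
    simpa using card_le_of_const_mem_cutMonoid_top (by norm_num) hx
  exact ⟨fun hsn => hnot (hsn x hgp h2 h3), x, hgp, h2, h3, hnot⟩
end
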